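/- arXiv:1601.02869 — 5 statements merged into one kernel-verified Lean document; each statement's English description precedes it below -/
import Mathlib

section
/- Let A be a closed bounded interval of length |A| and X : A → ℝ continuous with Lipschitz constant L. Then the sup norm of X is bounded: ‖X‖_∞ ≤ 2·max( |A|^{-1/2}·‖X‖₂ , L^{1/3}·‖X‖₂^{2/3} ), where ‖X‖₂ = (∫_A X(t)² dt)^{1/2}. -/
/-!
If `|X t| = M`, the Lipschitz bound keeps `|X| ≥ M / 2` on any window of length `δ ≤ M / (2L)`
containing `t`, and such a window fits inside `A` when `δ ≤ |A|`, so `(M / 2)² δ ≤ ‖X‖₂²`. When the whole interval is such a window this gives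
`M ≤ 2 |A|^{-1/2} ‖X‖₂`; otherwise `δ = M / (2L)` fits inside `A` and gives `M³ ≤ 8 L ‖X‖₂²`.
-/

open Set MeasureTheory

lemma exists_Icc_subset_Icc_mem {a b t δ : ℝ} (ht : t ∈ Icc a b) (hδ : 0 ≤ δ) (hδb : δ ≤ b - a) :
    ∃ c, Icc c (c + δ) ⊆ Icc a b ∧ t ∈ Icc c (c + δ) := by
  refine ⟨min t (b - δ), Icc_subset_Icc ?_ ?_, min_le_left _ _, ?_⟩
  · exact le_min ht.1 (by linarith)
  · linarith [min_le_right t (b - δ)]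
  · linarith [le_min (by linarith : t - δ ≤ t) (by linarith [ht.2] : t - δ ≤ b - δ)]

lemma mul_sub_le_integral_of_le_on_Icc {f : ℝ → ℝ} {a b c d m : ℝ}
    (hf : IntervalIntegrable f volume a b) (hf0 : ∀ u ∈ Icc a b, 0 ≤ f u) (hcd : c ≤ d)
    (hsub : Icc c d ⊆ Icc a b) (hm : ∀ u ∈ Icc c d, m ≤ f u) :
    m * (d - c) ≤ ∫ u in a..b, f u := by
  obtain ⟨hac, -⟩ := hsub (left_mem_Icc.2 hcd)
  obtain ⟨-, hdb⟩ := hsub (right_mem_Icc.2 hcd)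
  have hfcd : IntervalIntegrable f volume c d :=
    hf.mono_set (by rwa [uIcc_of_le hcd, uIcc_of_le (hac.trans (hcd.trans hdb))])
  have hf0' : 0 ≤ᵐ[volume.restrict (Ioc a b)] f :=
    (ae_restrict_iff' measurableSet_Ioc).2 (ae_of_all _ fun u hu => hf0 u (Ioc_subset_Icc_self hu))
  calc m * (d - c) = ∫ _ in c..d, m := by simp [mul_comm]
    _ ≤ ∫ u in c..d, f u := intervalIntegral.integral_mono_on hcd intervalIntegrable_const hfcd hm
    _ ≤ ∫ u in a..b, f u := intervalIntegral.integral_mono_interval hac hcd hdb hf0' hf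

lemma sq_half_abs_mul_le_integral_sq {X : ℝ → ℝ} {a b L δ t : ℝ} (hL : 0 ≤ L)
    (hLip : ∀ s ∈ Icc a b, ∀ t ∈ Icc a b, |X s - X t| ≤ L * |s - t|)
    (ht : t ∈ Icc a b) (hδ : 0 ≤ δ) (hδb : δ ≤ b - a) (hLδ : L * δ ≤ |X t| / 2) :
    (|X t| / 2) ^ 2 * δ ≤ ∫ u in a..b, X u ^ 2 := by
  have hX : ContinuousOn X (Icc a b) :=
    (LipschitzOnWith.of_dist_le' (K := L) (by simpa only [Real.dist_eq] using hLip)).continuousOn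
  have hX2 : IntervalIntegrable (fun u => X u ^ 2) volume a b :=
    (hX.pow 2).intervalIntegrable_of_Icc (by linarith)
  obtain ⟨c, hsub, htc⟩ := exists_Icc_subset_Icc_mem ht hδ hδb
  have hwindow : ∀ u ∈ Icc c (c + δ), (|X t| / 2) ^ 2 ≤ X u ^ 2 := by
    intro u hu
    have hut : |u - t| ≤ δ := abs_sub_le_iff.2 ⟨by linarith [hu.2, htc.1], by linarith [hu.1, htc.2]⟩
    have hclose : |X u - X t| ≤ |X t| / 2 :=
      (hLip u (hsub hu) t ht).trans ((mul_le_mul_of_nonneg_left hut hL).trans hLδ)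
    have hhalf : |X t| / 2 ≤ |X u| := by
      linarith [abs_sub_abs_le_abs_sub (X t) (X u), abs_sub_comm (X t) (X u)]
    rw [← sq_abs (X u)]
    gcongr
  simpa only [add_sub_cancel_left] using
    mul_sub_le_integral_of_le_on_Icc hX2 (fun u _ => sq_nonneg (X u)) (by linarith) hsub hwindow

lemma le_two_mul_rpow_neg_half_mul_rpow_half {ℓ I M : ℝ} (hℓ : 0 < ℓ) (h : (M / 2) ^ 2 * ℓ ≤ I) :
    M ≤ 2 * (ℓ ^ (-(1:ℝ)/2) * I ^ ((1:ℝ)/2)) := by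
  have hsqrt : ℓ ^ (-(1:ℝ)/2) * I ^ ((1:ℝ)/2) = √(I / ℓ) := by
    rw [neg_div, Real.rpow_neg hℓ.le, ← Real.sqrt_eq_rpow, ← Real.sqrt_eq_rpow,
      Real.sqrt_div' _ hℓ.le, div_eq_inv_mul]
  rw [hsqrt]
  linarith [(le_abs_self (M / 2)).trans (Real.abs_le_sqrt ((le_div_iff₀ hℓ).2 h))]

lemma le_two_mul_rpow_third_mul_rpow_half_rpow {L I M : ℝ} (hL : 0 ≤ L) (hI : 0 ≤ I)
    (hM : 0 ≤ M) (h : (M / 2) ^ 3 ≤ L * I) :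
    M ≤ 2 * (L ^ ((1:ℝ)/3) * (I ^ ((1:ℝ)/2)) ^ ((2:ℝ)/3)) := by
  have hcbrt : L ^ ((1:ℝ)/3) * (I ^ ((1:ℝ)/2)) ^ ((2:ℝ)/3) = (L * I) ^ (3:ℝ)⁻¹ := by
    rw [← Real.rpow_mul hI, Real.mul_rpow hL hI]
    norm_num
  have hcube : (M / 2) ^ (3:ℝ) ≤ L * I := by rwa [Real.rpow_ofNat]
  rw [hcbrt]
  linarith [(Real.le_rpow_inv_iff_of_pos (by positivity) (by positivity) (by norm_num)).2 hcube]

theorem sup_le_two_mul_max_L2_lipschitz_general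
    (a b : ℝ) (hab : a < b) (X : ℝ → ℝ)
    (L : ℝ) (hL : 0 ≤ L)
    (hLip : ∀ s ∈ Set.Icc a b, ∀ t ∈ Set.Icc a b, |X s - X t| ≤ L * |s - t|) :
    ∀ t ∈ Set.Icc a b,
      |X t| ≤ 2 * max ((b - a) ^ (-(1:ℝ)/2) * (∫ u in a..b, X u ^ 2) ^ ((1:ℝ)/2))
        (L ^ ((1:ℝ)/3) * ((∫ u in a..b, X u ^ 2) ^ ((1:ℝ)/2)) ^ ((2:ℝ)/3)) := by
  intro t ht
  set I := ∫ u in a..b, X u ^ 2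
  have hI : 0 ≤ I := intervalIntegral.integral_nonneg hab.le fun u _ => sq_nonneg (X u)
  rcases le_or_gt (L * (b - a)) (|X t| / 2) with hshort | hlong
  · have h := sq_half_abs_mul_le_integral_sq hL hLip ht (sub_nonneg.2 hab.le) le_rfl hshort
    refine (le_two_mul_rpow_neg_half_mul_rpow_half (sub_pos.2 hab) h).trans ?_
    gcongr
    exact le_max_left _ _
  · have hL0 : 0 < L :=
      pos_of_mul_pos_left ((by positivity : 0 ≤ |X t| / 2).trans_lt hlong) (sub_nonneg.2 hab.le)
    set δ := |X t| / (2 * L) with hδ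
    have hLδ : L * δ = |X t| / 2 := by rw [hδ]; field_simp
    have hδb : δ ≤ b - a := by
      rw [div_le_iff₀ (by positivity)]
      linarith
    have h := sq_half_abs_mul_le_integral_sq hL hLip ht (by positivity) hδb hLδ.le
    have hcube : (|X t| / 2) ^ 3 ≤ L * I := by
      calc (|X t| / 2) ^ 3 = (|X t| / 2) ^ 2 * δ * L := by rw [hδ]; field_simp
        _ ≤ I * L := by gcongr
        _ = L * I := mul_comm I L
    refine (le_two_mul_rpow_third_mul_rpow_half_rpow hL hI (abs_nonneg _) hcube).trans ?_
    gcongr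
    exact le_max_right _ _

/-- Sup norm bound for a Lipschitz continuous function in terms of its L² norm:
`‖X‖_∞ ≤ 2 max(|A|^{-1/2} ‖X‖₂, L^{1/3} ‖X‖₂^{2/3})`. -/
theorem sup_le_two_mul_max_L2_lipschitz
    (a b : ℝ) (hab : a < b) (X : ℝ → ℝ)
    (hX : ContinuousOn X (Set.Icc a b))
    (L : ℝ) (hL : 0 ≤ L)
    (hLip : ∀ s ∈ Set.Icc a b, ∀ t ∈ Set.Icc a b, |X s - X t| ≤ L * |s - t|) :
    ∀ t ∈ Set.Icc a b,
      |X t| ≤ 2 * max ((b - a) ^ (-(1:ℝ)/2) * (∫ u in a..b, X u ^ 2) ^ ((1:ℝ)/2))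
        (L ^ ((1:ℝ)/3) * ((∫ u in a..b, X u ^ 2) ^ ((1:ℝ)/2)) ^ ((2:ℝ)/3)) :=
  sup_le_two_mul_max_L2_lipschitz_general a b hab X L hL hLip
end

section
/- The log hazard transformation ψ_H is Lipschitz in sup norm: for densities f, g as in the context and 0 < δ < 1, sup_{x∈[0,1-δ]} |ψ_H(f)(x) - ψ_H(g)(x)| ≤ D₀(1 + δ^{-1}) · sup_{x∈[0,1]} |f(x) - g(x)|, where ψ_H(f)(x) = log( f(x) / (1 - F(x)) ). -/
/-! Split `ψ_H(f) - ψ_H(g)` into `log f - log g` and `log (1 - F) - log (1 - G)`.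
The logarithm is `1/c`-Lipschitz on `[c, ∞)`, and `f, g ≥ D₀⁻¹` on `[0, 1]` while
`1 - F, 1 - G ≥ δ D₀⁻¹` on `[0, 1 - δ]`, so the two terms are at most `D₀ sup |f - g|`
and `D₀ δ⁻¹ sup |F - G|`; finally `|F - G| ≤ sup |f - g|` because `[0, 1]` has length one. -/

open Set Real MeasureTheory intervalIntegral

lemma abs_log_sub_log_le_abs_sub_div {a b c : ℝ} (hc : 0 < c) (ha : c ≤ a) (hb : c ≤ b) :
    |log a - log b| ≤ |a - b| / c := by
  wlog hba : b ≤ a generalizing a b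
  · rw [abs_sub_comm, abs_sub_comm a]
    exact this hb ha (le_of_not_ge hba)
  have ha0 : 0 < a := hc.trans_le ha
  have hb0 : 0 < b := hc.trans_le hb
  rw [abs_of_nonneg (sub_nonneg.2 (log_le_log hb0 hba)), abs_of_nonneg (sub_nonneg.2 hba),
    ← log_div ha0.ne' hb0.ne']
  calc log (a / b) ≤ a / b - 1 := log_le_sub_one_of_pos (div_pos ha0 hb0)
    _ = (a - b) / b := by field_simp
    _ ≤ (a - b) / c := by gcongr

lemma abs_log_div_sub_log_div_le {a b c d ε η : ℝ} (hε : 0 < ε) (ha : ε ≤ a) (hb : ε ≤ b)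
    (hη : 0 < η) (hc : η ≤ c) (hd : η ≤ d) :
    |log (a / c) - log (b / d)| ≤ |a - b| / ε + |c - d| / η := by
  rw [log_div (hε.trans_le ha).ne' (hη.trans_le hc).ne',
    log_div (hε.trans_le hb).ne' (hη.trans_le hd).ne']
  calc |log a - log c - (log b - log d)| = |(log a - log b) - (log c - log d)| := by
        congr 1; ring
    _ ≤ |log a - log b| + |log c - log d| := abs_sub _ _
    _ ≤ |a - b| / ε + |c - d| / η :=
        add_le_add (abs_log_sub_log_le_abs_sub_div hε ha hb)
          (abs_log_sub_log_le_abs_sub_div hη hc hd)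

lemma IsCompact.le_ciSup_of_continuousOn {α : Type*} [TopologicalSpace α] {s : Set α}
    {u : α → ℝ} (hs : IsCompact s) (hu : ContinuousOn u s) {y : α} (hy : y ∈ s) :
    u y ≤ ⨆ z : s, u z := by
  refine le_ciSup (f := fun z : s => u z) ?_ ⟨y, hy⟩
  rw [← image_eq_range]
  exact (hs.image_of_continuousOn hu).bddAbove

lemma mul_le_intervalIntegral_of_le {h : ℝ → ℝ} {a b m : ℝ} (hab : a ≤ b)
    (hint : IntervalIntegrable h volume a b) (hm : ∀ x ∈ Icc a b, m ≤ h x) :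
    (b - a) * m ≤ ∫ x in a..b, h x := by
  simpa [mul_comm] using integral_mono_on hab intervalIntegrable_const hint hm

lemma abs_intervalIntegral_sub_le {f g : ℝ → ℝ} {a b M : ℝ} (hab : a ≤ b)
    (hf : IntervalIntegrable f volume a b) (hg : IntervalIntegrable g volume a b)
    (hM : ∀ x ∈ Icc a b, |f x - g x| ≤ M) :
    |(∫ x in a..b, f x) - ∫ x in a..b, g x| ≤ M * (b - a) := by
  rw [← integral_sub hf hg, ← abs_of_nonneg (sub_nonneg.2 hab)]
  refine intervalIntegral.norm_integral_le_of_norm_le_const (f := fun x => f x - g x)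
    fun x hx => ?_
  rw [uIoc_of_le hab] at hx
  exact hM x (Ioc_subset_Icc_self hx)

lemma abs_intervalIntegral_sub_le_of_le_one {f g : ℝ → ℝ} {M x : ℝ}
    (hfc : ContinuousOn f (Icc 0 1)) (hgc : ContinuousOn g (Icc 0 1))
    (hM : ∀ y ∈ Icc (0:ℝ) 1, |f y - g y| ≤ M) (hx : x ∈ Icc (0:ℝ) 1) :
    |(∫ y in (0:ℝ)..x, f y) - ∫ y in (0:ℝ)..x, g y| ≤ M := by
  have hsub : Icc 0 x ⊆ Icc (0:ℝ) 1 := Icc_subset_Icc le_rfl hx.2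
  have hM0 : 0 ≤ M := (abs_nonneg _).trans (hM 0 (left_mem_Icc.2 zero_le_one))
  calc _ ≤ M * (x - 0) := abs_intervalIntegral_sub_le hx.1
        ((hfc.mono hsub).intervalIntegrable_of_Icc hx.1)
        ((hgc.mono hsub).intervalIntegrable_of_Icc hx.1) fun y hy => hM y (hsub hy)
    _ ≤ M := by
        rw [sub_zero]
        exact mul_le_of_le_one_right hM0 hx.2

lemma mul_one_sub_le_one_sub_intervalIntegral {f : ℝ → ℝ} {c x : ℝ}
    (hfc : ContinuousOn f (Icc 0 1)) (hf1 : ∫ y in (0:ℝ)..1, f y = 1)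
    (hcf : ∀ y ∈ Icc (0:ℝ) 1, c ≤ f y) (hx : x ∈ Icc (0:ℝ) 1) :
    (1 - x) * c ≤ 1 - ∫ y in (0:ℝ)..x, f y := by
  have hint : ∀ a ∈ Icc (0:ℝ) 1, ∀ b ∈ Icc (0:ℝ) 1, IntervalIntegrable f volume a b :=
    fun a ha b hb => (hfc.mono (uIcc_subset_Icc ha hb)).intervalIntegrable
  have h0 : (0:ℝ) ∈ Icc (0:ℝ) 1 := left_mem_Icc.2 zero_le_one
  have h1 : (1:ℝ) ∈ Icc (0:ℝ) 1 := right_mem_Icc.2 zero_le_one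
  calc (1 - x) * c ≤ ∫ y in x..1, f y :=
        mul_le_intervalIntegral_of_le hx.2 (hint x hx 1 h1)
          fun y hy => hcf y ⟨hx.1.trans hy.1, hy.2⟩
    _ = 1 - ∫ y in (0:ℝ)..x, f y := by
        rw [← integral_interval_sub_left (hint 0 h0 1 h1) (hint 0 h0 x hx), hf1]

theorem log_hazard_sup_lipschitz_general
    (f g : ℝ → ℝ) (D₀ δ : ℝ) (hδ : 0 < δ)
    (hfc : ContinuousOn f (Set.Icc 0 1)) (hgc : ContinuousOn g (Set.Icc 0 1))
    (hfpos : ∀ x ∈ Set.Icc (0:ℝ) 1, 0 < f x) (hgpos : ∀ x ∈ Set.Icc (0:ℝ) 1, 0 < g x)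
    (hf1 : (∫ x in (0:ℝ)..1, f x) = 1) (hg1 : (∫ x in (0:ℝ)..1, g x) = 1)
    (hD : ∀ x ∈ Set.Icc (0:ℝ) 1,
      f x ≤ D₀ ∧ (f x)⁻¹ ≤ D₀ ∧ g x ≤ D₀ ∧ (g x)⁻¹ ≤ D₀)
    (F G : ℝ → ℝ)
    (hF : ∀ x, F x = ∫ s in (0:ℝ)..x, f s) (hG : ∀ x, G x = ∫ s in (0:ℝ)..x, g s) :
    ∀ x ∈ Set.Icc (0:ℝ) (1 - δ),
      |Real.log (f x / (1 - F x)) - Real.log (g x / (1 - G x))| ≤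
        D₀ * (1 + δ⁻¹) * ⨆ y : Set.Icc (0:ℝ) 1, |f y.1 - g y.1| := by
  intro x hx
  have hx1 : x ∈ Icc (0:ℝ) 1 := ⟨hx.1, hx.2.trans (by linarith)⟩
  have h0 : (0:ℝ) ∈ Icc (0:ℝ) 1 := left_mem_Icc.2 zero_le_one
  have hD₀ : 0 < D₀ := (hfpos 0 h0).trans_le (hD 0 h0).1
  have hflow : ∀ y ∈ Icc (0:ℝ) 1, D₀⁻¹ ≤ f y :=
    fun y hy => (inv_le_comm₀ hD₀ (hfpos y hy)).2 (hD y hy).2.1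
  have hglow : ∀ y ∈ Icc (0:ℝ) 1, D₀⁻¹ ≤ g y :=
    fun y hy => (inv_le_comm₀ hD₀ (hgpos y hy)).2 (hD y hy).2.2.2
  set M := ⨆ y : Icc (0:ℝ) 1, |f y.1 - g y.1|
  have hM : ∀ y ∈ Icc (0:ℝ) 1, |f y - g y| ≤ M :=
    fun y hy => isCompact_Icc.le_ciSup_of_continuousOn (hfc.sub hgc).abs hy
  have hFG : |F x - G x| ≤ M :=
    hF x ▸ hG x ▸ abs_intervalIntegral_sub_le_of_le_one hfc hgc hM hx1
  have hδx : δ * D₀⁻¹ ≤ (1 - x) * D₀⁻¹ := by gcongr; linarith [hx.2]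
  have hFtail : δ * D₀⁻¹ ≤ 1 - F x :=
    hF x ▸ hδx.trans (mul_one_sub_le_one_sub_intervalIntegral hfc hf1 hflow hx1)
  have hGtail : δ * D₀⁻¹ ≤ 1 - G x :=
    hG x ▸ hδx.trans (mul_one_sub_le_one_sub_intervalIntegral hgc hg1 hglow hx1)
  calc _ ≤ |f x - g x| / D₀⁻¹ + |(1 - F x) - (1 - G x)| / (δ * D₀⁻¹) :=
        abs_log_div_sub_log_div_le (inv_pos.2 hD₀) (hflow x hx1) (hglow x hx1) (by positivity)
          hFtail hGtail
    _ ≤ M / D₀⁻¹ + M / (δ * D₀⁻¹) := by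
        rw [sub_sub_sub_cancel_left, abs_sub_comm (G x)]
        gcongr
        exact hM x hx1
    _ = D₀ * (1 + δ⁻¹) * M := by field_simp

/-- The log hazard transformation is Lipschitz in sup norm:
`sup_{[0,1-δ]} |ψ_H(f) - ψ_H(g)| ≤ D₀(1 + δ⁻¹) sup |f - g|`. -/
theorem log_hazard_sup_lipschitz
    (f g : ℝ → ℝ) (D₀ δ : ℝ) (hδ : 0 < δ) (hδ1 : δ < 1)
    (hfc : ContinuousOn f (Set.Icc 0 1)) (hgc : ContinuousOn g (Set.Icc 0 1))
    (hfpos : ∀ x ∈ Set.Icc (0:ℝ) 1, 0 < f x) (hgpos : ∀ x ∈ Set.Icc (0:ℝ) 1, 0 < g x)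
    (hf1 : (∫ x in (0:ℝ)..1, f x) = 1) (hg1 : (∫ x in (0:ℝ)..1, g x) = 1)
    (hD : ∀ x ∈ Set.Icc (0:ℝ) 1,
      f x ≤ D₀ ∧ (f x)⁻¹ ≤ D₀ ∧ g x ≤ D₀ ∧ (g x)⁻¹ ≤ D₀)
    (F G : ℝ → ℝ)
    (hF : ∀ x, F x = ∫ s in (0:ℝ)..x, f s) (hG : ∀ x, G x = ∫ s in (0:ℝ)..x, g s) :
    ∀ x ∈ Set.Icc (0:ℝ) (1 - δ),
      |Real.log (f x / (1 - F x)) - Real.log (g x / (1 - G x))| ≤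
        D₀ * (1 + δ⁻¹) * ⨆ y : Set.Icc (0:ℝ) 1, |f y.1 - g y.1| :=
  log_hazard_sup_lipschitz_general f g D₀ δ hδ hfc hgc hfpos hgpos hf1 hg1 hD F G hF hG
end

section
/- The log hazard transformation ψ_H satisfies the L² bound: d₂(ψ_H(f), ψ_H(g))² ≤ 2 D₀² (1 + δ^{-2}) · d₂(f,g)², where d₂ denotes the L² distance on [0,1-δ] on the left and on [0,1] on the right. -/
/-!
On `[0, 1 - δ]` the difference of log hazards splits as
`(log f - log g) - (log (1 - F) - log (1 - G))`. The logarithm is `1/c`-Lipschitz on `[c, ∞)`;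
the densities are at least `1/D₀`, and the survival functions `1 - F = ∫_x^1 f` are at least
`δ/D₀` there, so the two differences are bounded by `D₀ |f - g|` and `(D₀/δ) |F - G|`.
By Cauchy–Schwarz, `|F(x) - G(x)| = |∫_0^x (f - g)| ≤ d₂(f, g)`. Squaring with
`(a - b)² ≤ 2a² + 2b²` and integrating over `[0, 1 - δ] ⊆ [0, 1]` gives the bound.
-/

open MeasureTheory Set Real

theorem log_sub_log_le_of_le {a b c : ℝ} (hc : 0 < c) (ha : c ≤ a) (hb : c ≤ b) :
    log a - log b ≤ c⁻¹ * |a - b| := by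
  have ha₀ : 0 < a := hc.trans_le ha
  have hb₀ : 0 < b := hc.trans_le hb
  calc log a - log b = log (a / b) := (log_div ha₀.ne' hb₀.ne').symm
    _ ≤ a / b - 1 := log_le_sub_one_of_pos (div_pos ha₀ hb₀)
    _ = (a - b) / b := by field_simp
    _ ≤ |a - b| / c := div_le_div₀ (abs_nonneg _) (le_abs_self _) hc hb
    _ = c⁻¹ * |a - b| := (inv_mul_eq_div _ _).symm

theorem abs_log_sub_log_le_of_le {a b c : ℝ} (hc : 0 < c) (ha : c ≤ a) (hb : c ≤ b) :
    |log a - log b| ≤ c⁻¹ * |a - b| :=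
  abs_sub_le_iff.2
    ⟨log_sub_log_le_of_le hc ha hb, abs_sub_comm a b ▸ log_sub_log_le_of_le hc hb ha⟩

theorem sq_log_div_sub_log_div_le {p q P Q c C : ℝ} (hc : 0 < c) (hp : c ≤ p) (hq : c ≤ q)
    (hC : 0 < C) (hP : C ≤ P) (hQ : C ≤ Q) :
    (log (p / P) - log (q / Q)) ^ 2 ≤
      2 * c⁻¹ ^ 2 * (p - q) ^ 2 + 2 * C⁻¹ ^ 2 * (P - Q) ^ 2 := by
  have sq_le {x y : ℝ} (h : |x| ≤ y) : x ^ 2 ≤ y ^ 2 :=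
    sq_abs x ▸ pow_le_pow_left₀ (abs_nonneg x) h 2
  have hA := sq_le (abs_log_sub_log_le_of_le hc hp hq)
  have hB := sq_le (abs_log_sub_log_le_of_le hC hP hQ)
  rw [mul_pow, sq_abs] at hA hB
  rw [log_div (hc.trans_le hp).ne' (hC.trans_le hP).ne',
    log_div (hc.trans_le hq).ne' (hC.trans_le hQ).ne']
  nlinarith [sq_nonneg (log p - log q + (log P - log Q))]

theorem sq_intervalIntegral_le {h : ℝ → ℝ} {a b : ℝ} (hab : a ≤ b)
    (hh : IntervalIntegrable h volume a b)
    (hh2 : IntervalIntegrable (fun s => h s ^ 2) volume a b) :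
    (∫ s in a..b, h s) ^ 2 ≤ (b - a) * ∫ s in a..b, h s ^ 2 := by
  set J := ∫ s in a..b, h s
  set K := ∫ s in a..b, h s ^ 2
  rcases hab.eq_or_lt with rfl | hlt
  · simp [J]
  -- `0 ≤ ∫ ((b - a) h - J)² = (b - a) ((b - a) K - J²)`
  have hvar : 0 ≤ ∫ s in a..b, ((b - a) * h s - J) ^ 2 :=
    intervalIntegral.integral_nonneg hab fun s _ => sq_nonneg _
  have hexpand : ∫ s in a..b, ((b - a) * h s - J) ^ 2 = (b - a) * ((b - a) * K - J ^ 2) := by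
    have hpt : ∀ s, ((b - a) * h s - J) ^ 2 =
        (b - a) ^ 2 * h s ^ 2 - 2 * (b - a) * J * h s + J ^ 2 := fun s => by ring
    simp_rw [hpt]
    rw [intervalIntegral.integral_add ((hh2.const_mul _).sub (hh.const_mul _))
        intervalIntegrable_const, intervalIntegral.integral_sub (hh2.const_mul _) (hh.const_mul _),
      intervalIntegral.integral_const_mul, intervalIntegral.integral_const_mul,
      intervalIntegral.integral_const, smul_eq_mul]
    ring
  rw [hexpand] at hvar
  nlinarith [(mul_nonneg_iff_of_pos_left (sub_pos.2 hlt)).1 hvar]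

theorem sq_primitive_le_integral_sq {h : ℝ → ℝ} {x : ℝ}
    (hh : IntervalIntegrable h volume 0 1)
    (hh2 : IntervalIntegrable (fun s => h s ^ 2) volume 0 1) (hx : x ∈ Icc (0 : ℝ) 1) :
    (∫ s in (0 : ℝ)..x, h s) ^ 2 ≤ ∫ s in (0 : ℝ)..1, h s ^ 2 := by
  have hsub : uIcc 0 x ⊆ uIcc (0 : ℝ) 1 := uIcc_subset_uIcc_left (mem_uIcc_of_le hx.1 hx.2)
  calc (∫ s in (0 : ℝ)..x, h s) ^ 2 ≤ (x - 0) * ∫ s in (0 : ℝ)..x, h s ^ 2 :=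
        sq_intervalIntegral_le hx.1 (hh.mono_set hsub) (hh2.mono_set hsub)
    _ ≤ 1 * ∫ s in (0 : ℝ)..1, h s ^ 2 := by
        gcongr
        · exact intervalIntegral.integral_nonneg hx.1 fun s _ => sq_nonneg _
        · linarith [hx.2]
        · exact intervalIntegral.integral_mono_interval le_rfl hx.1 hx.2
            (Filter.Eventually.of_forall fun s => sq_nonneg (h s)) hh2
    _ = ∫ s in (0 : ℝ)..1, h s ^ 2 := one_mul _

theorem mul_le_one_sub_primitive {h : ℝ → ℝ} {c δ x : ℝ}
    (hh : IntervalIntegrable h volume 0 1) (hmass : ∫ s in (0 : ℝ)..1, h s = 1)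
    (hc₀ : 0 ≤ c) (hc : ∀ s ∈ Icc (0 : ℝ) 1, c ≤ h s)
    (hδ : 0 ≤ δ) (hx : x ∈ Icc 0 (1 - δ)) :
    c * δ ≤ 1 - ∫ s in (0 : ℝ)..x, h s := by
  have hx₁ : x ≤ 1 := by linarith [hx.2]
  have htail := intervalIntegral.integral_interval_sub_left hh
    (hh.mono_set (uIcc_subset_uIcc_left (mem_uIcc_of_le hx.1 hx₁)))
  rw [hmass] at htail
  calc c * δ ≤ c * (1 - x) := by gcongr; linarith [hx.2]
    _ = ∫ _ in x..1, c := by simp [mul_comm]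
    _ ≤ ∫ s in x..1, h s := intervalIntegral.integral_mono_on hx₁ intervalIntegrable_const
        (hh.mono_set (uIcc_subset_uIcc_right (mem_uIcc_of_le hx.1 hx₁)))
        fun s hs => hc s ⟨hx.1.trans hs.1, hs.2⟩
    _ = 1 - ∫ s in (0 : ℝ)..x, h s := htail.symm

theorem intervalIntegral_le_mul_integral_add {u v : ℝ → ℝ} {K M b : ℝ}
    (hb : b ∈ Icc (0 : ℝ) 1)
    (hu : ∀ x ∈ Icc 0 b, 0 ≤ u x) (hv : ∀ x, 0 ≤ v x) (hK : 0 ≤ K) (hM : 0 ≤ M)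
    (hvi : IntervalIntegrable v volume 0 1) (huv : ∀ x ∈ Icc 0 b, u x ≤ K * (v x + M)) :
    ∫ x in (0 : ℝ)..b, u x ≤ K * ((∫ x in (0 : ℝ)..1, v x) + M) := by
  have hφ : IntervalIntegrable (fun x => K * (v x + M)) volume 0 1 :=
    (hvi.add intervalIntegrable_const).const_mul K
  have hφ_nonneg : ∀ x, 0 ≤ K * (v x + M) := fun x => mul_nonneg hK (add_nonneg (hv x) hM)
  calc ∫ x in (0 : ℝ)..b, u x ≤ ∫ x in (0 : ℝ)..b, K * (v x + M) := by
        rw [intervalIntegral.integral_of_le hb.1, intervalIntegral.integral_of_le hb.1]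
        exact setIntegral_mono_of_nonneg (fun x hx => hu x (Ioc_subset_Icc_self hx))
          (fun x hx => huv x (Ioc_subset_Icc_self hx))
          (hφ.mono_set (uIcc_subset_uIcc_left (mem_uIcc_of_le hb.1 hb.2))).1
    _ ≤ ∫ x in (0 : ℝ)..1, K * (v x + M) :=
        intervalIntegral.integral_mono_interval le_rfl hb.1 hb.2
          (Filter.Eventually.of_forall hφ_nonneg) hφ
    _ = K * ((∫ x in (0 : ℝ)..1, v x) + M) := by
        rw [intervalIntegral.integral_const_mul,
          intervalIntegral.integral_add hvi intervalIntegrable_const,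
          intervalIntegral.integral_const, sub_zero, one_smul]

/-- L² bound for the log hazard transformation:
`d₂(ψ_H(f), ψ_H(g))² ≤ 2 D₀² (1 + δ⁻²) d₂(f,g)²`. -/
theorem log_hazard_L2_bound
    (f g : ℝ → ℝ) (D₀ δ : ℝ) (hδ : 0 < δ) (hδ1 : δ < 1)
    (hfc : ContinuousOn f (Set.Icc 0 1)) (hgc : ContinuousOn g (Set.Icc 0 1))
    (hfpos : ∀ x ∈ Set.Icc (0:ℝ) 1, 0 < f x) (hgpos : ∀ x ∈ Set.Icc (0:ℝ) 1, 0 < g x)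
    (hf1 : (∫ x in (0:ℝ)..1, f x) = 1) (hg1 : (∫ x in (0:ℝ)..1, g x) = 1)
    (hD : ∀ x ∈ Set.Icc (0:ℝ) 1,
      f x ≤ D₀ ∧ (f x)⁻¹ ≤ D₀ ∧ g x ≤ D₀ ∧ (g x)⁻¹ ≤ D₀)
    (F G : ℝ → ℝ)
    (hF : ∀ x, F x = ∫ s in (0:ℝ)..x, f s) (hG : ∀ x, G x = ∫ s in (0:ℝ)..x, g s) :
    (∫ x in (0:ℝ)..(1 - δ),
        (Real.log (f x / (1 - F x)) - Real.log (g x / (1 - G x))) ^ 2) ≤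
      2 * D₀ ^ 2 * (1 + δ⁻¹ ^ 2) * ∫ x in (0:ℝ)..1, (f x - g x) ^ 2 := by
  have h0 : (0 : ℝ) ∈ Icc (0 : ℝ) 1 := ⟨le_rfl, zero_le_one⟩
  have hD₀ : 0 < D₀ := (inv_pos.2 (hfpos 0 h0)).trans_le (hD 0 h0).2.1
  have hf_low : ∀ x ∈ Icc (0 : ℝ) 1, D₀⁻¹ ≤ f x :=
    fun x hx => (inv_le_comm₀ hD₀ (hfpos x hx)).2 (hD x hx).2.1
  have hg_low : ∀ x ∈ Icc (0 : ℝ) 1, D₀⁻¹ ≤ g x :=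
    fun x hx => (inv_le_comm₀ hD₀ (hgpos x hx)).2 (hD x hx).2.2.2
  have hfi : IntervalIntegrable f volume 0 1 := hfc.intervalIntegrable_of_Icc zero_le_one
  have hgi : IntervalIntegrable g volume 0 1 := hgc.intervalIntegrable_of_Icc zero_le_one
  have hdi : IntervalIntegrable (fun x => (f x - g x) ^ 2) volume 0 1 :=
    ((hfc.sub hgc).pow 2).intervalIntegrable_of_Icc zero_le_one
  set I := ∫ x in (0 : ℝ)..1, (f x - g x) ^ 2
  have hcdf : ∀ x ∈ Icc (0 : ℝ) 1, ((1 - F x) - (1 - G x)) ^ 2 ≤ I := by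
    intro x hx
    have hsub : uIcc 0 x ⊆ uIcc (0 : ℝ) 1 :=
      uIcc_subset_uIcc_left (mem_uIcc_of_le hx.1 hx.2)
    rw [sub_sub_sub_cancel_left, ← neg_sub, neg_sq, hF, hG,
      ← intervalIntegral.integral_sub (hfi.mono_set hsub) (hgi.mono_set hsub)]
    exact sq_primitive_le_integral_sq (hfi.sub hgi) hdi hx
  have hsub : Icc (0 : ℝ) (1 - δ) ⊆ Icc 0 1 := Icc_subset_Icc le_rfl (by linarith)
  have hI : 0 ≤ I := intervalIntegral.integral_nonneg zero_le_one fun _ _ => sq_nonneg _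
  have hpt : ∀ x ∈ Icc (0 : ℝ) (1 - δ),
      (log (f x / (1 - F x)) - log (g x / (1 - G x))) ^ 2 ≤
        2 * D₀ ^ 2 * ((f x - g x) ^ 2 + δ⁻¹ ^ 2 * I) := by
    intro x hx
    have hFx := hF x ▸ mul_le_one_sub_primitive hfi hf1 (by positivity) hf_low hδ.le hx
    have hGx := hG x ▸ mul_le_one_sub_primitive hgi hg1 (by positivity) hg_low hδ.le hx
    refine (sq_log_div_sub_log_div_le (inv_pos.2 hD₀) (hf_low x (hsub hx))
      (hg_low x (hsub hx)) (by positivity) hFx hGx).trans ?_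
    rw [inv_inv, mul_inv, inv_inv, mul_pow]
    nlinarith [mul_le_mul_of_nonneg_left (hcdf x (hsub hx))
      (by positivity : 0 ≤ 2 * D₀ ^ 2 * δ⁻¹ ^ 2)]
  calc _ ≤ 2 * D₀ ^ 2 * (I + δ⁻¹ ^ 2 * I) :=
        intervalIntegral_le_mul_integral_add (hsub ⟨by linarith, le_rfl⟩)
          (fun _ _ => sq_nonneg _) (fun _ => sq_nonneg _) (by positivity) (by positivity) hdi hpt
    _ = 2 * D₀ ^ 2 * (1 + δ⁻¹ ^ 2) * I := by ring
end

section
/- The log quantile density transformation is Lipschitz in sup norm: for densities f, g with constant D₀ as in the context, sup_{t∈[0,1]} |ψ_Q(f)(t) - ψ_Q(g)(t)| ≤ D₀(D₀² + 1) · sup_{x∈[0,1]} |f(x) - g(x)|, where ψ_Q(f)(t) = -log f(F^{-1}(t)). -/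
/-!
Since `f ≥ 1/D₀`, the cdf `F` grows at rate at least `1/D₀`, so the quantiles satisfy
`|F⁻¹(t) - G⁻¹(t)| ≤ D₀ |F(G⁻¹(t)) - G(G⁻¹(t))| ≤ D₀ sup |f - g|`. The mean value theorem turns
this into `|f(F⁻¹(t)) - f(G⁻¹(t))| ≤ D₀² sup |f - g|`, and `log` is `D₀`-Lipschitz on `[1/D₀, ∞)`;
the triangle inequality through `f(G⁻¹(t))` combines the two.
-/

open Set intervalIntegral

lemma Real.abs_log_sub_log_le {D u v : ℝ} (hu : 0 < u) (hv : 0 < v) (huD : u⁻¹ ≤ D)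
    (hvD : v⁻¹ ≤ D) : |Real.log u - Real.log v| ≤ D * |u - v| := by
  wlog hvu : v ≤ u generalizing u v
  · rw [abs_sub_comm, abs_sub_comm u]
    exact this hv hu hvD huD (le_of_not_ge hvu)
  have hlog : Real.log u - Real.log v ≤ v⁻¹ * (u - v) := by
    calc Real.log u - Real.log v = Real.log (u / v) := (Real.log_div hu.ne' hv.ne').symm
      _ ≤ u / v - 1 := Real.log_le_sub_one_of_pos (div_pos hu hv)
      _ = v⁻¹ * (u - v) := by field_simp
  rw [abs_of_nonneg (sub_nonneg.2 (Real.log_le_log hv hvu)), abs_of_nonneg (sub_nonneg.2 hvu)]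
  exact hlog.trans (mul_le_mul_of_nonneg_right hvD (sub_nonneg.2 hvu))

lemma le_ciSup_of_isCompact_of_continuousOn {X : Type*} [TopologicalSpace X] {s : Set X}
    {φ : X → ℝ} (hs : IsCompact s) (hφ : ContinuousOn φ s) {x : X} (hx : x ∈ s) :
    φ x ≤ ⨆ y : s, φ y :=
  le_ciSup (image_eq_range φ s ▸ hs.bddAbove_image hφ) ⟨x, hx⟩

lemma abs_integral_le_of_abs_le_on_Icc {h : ℝ → ℝ} {a b x M : ℝ} (hx : x ∈ Icc a b)
    (hM : ∀ s ∈ Icc a b, |h s| ≤ M) : |∫ s in a..x, h s| ≤ M * (b - a) := by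
  have hM₀ : 0 ≤ M := (abs_nonneg _).trans (hM a ⟨le_rfl, hx.1.trans hx.2⟩)
  calc |∫ s in a..x, h s| ≤ M * |x - a| :=
        norm_integral_le_of_norm_le_const (f := h) fun s hs =>
          hM s (uIcc_subset_Icc (left_mem_Icc.2 (hx.1.trans hx.2)) hx (uIoc_subset_uIcc hs))
    _ ≤ M * (b - a) := by
        rw [abs_of_nonneg (sub_nonneg.2 hx.1)]
        exact mul_le_mul_of_nonneg_left (by linarith [hx.2]) hM₀

lemma abs_integral_sub_integral_le_of_abs_sub_le_on_Icc {f g : ℝ → ℝ} {a b x M : ℝ}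
    (hf : ContinuousOn f (Icc a b)) (hg : ContinuousOn g (Icc a b)) (hx : x ∈ Icc a b)
    (hM : ∀ s ∈ Icc a b, |f s - g s| ≤ M) :
    |(∫ s in a..x, f s) - ∫ s in a..x, g s| ≤ M * (b - a) := by
  have hsub : uIcc a x ⊆ Icc a b := uIcc_subset_Icc (left_mem_Icc.2 (hx.1.trans hx.2)) hx
  rw [← integral_sub ((hf.mono hsub).intervalIntegrable) ((hg.mono hsub).intervalIntegrable)]
  exact abs_integral_le_of_abs_le_on_Icc hx hM

lemma abs_sub_le_mul_abs_integral {f : ℝ → ℝ} {D u v : ℝ}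
    (hfi : IntervalIntegrable f MeasureTheory.volume u v)
    (hf : ∀ x ∈ uIcc u v, 0 < f x ∧ (f x)⁻¹ ≤ D) : |u - v| ≤ D * |∫ x in u..v, f x| := by
  wlog huv : u ≤ v generalizing u v
  · rw [abs_sub_comm, integral_symm, abs_neg]
    exact this hfi.symm (uIcc_comm u v ▸ hf) (le_of_not_ge huv)
  have hone : ∀ x ∈ Icc u v, (1 : ℝ) ≤ D * f x := fun x hx => by
    obtain ⟨hfx, hfxD⟩ := hf x (uIcc_of_le huv ▸ hx)
    simpa [hfx.ne'] using mul_le_mul_of_nonneg_right hfxD hfx.le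
  have hint : v - u ≤ ∫ x in u..v, D * f x := by
    simpa using integral_mono_on huv intervalIntegrable_const (hfi.const_mul D) hone
  rw [integral_const_mul] at hint
  rw [abs_sub_comm, abs_of_nonneg (sub_nonneg.2 huv)]
  have hD : 0 ≤ D := (inv_pos.2 (hf u left_mem_uIcc).1).le.trans (hf u left_mem_uIcc).2
  exact hint.trans (mul_le_mul_of_nonneg_left (le_abs_self _) hD)

lemma abs_sub_le_mul_abs_integral_sub_integral {f : ℝ → ℝ} {D a b x y : ℝ}
    (hfc : ContinuousOn f (Icc a b)) (hf : ∀ s ∈ Icc a b, 0 < f s ∧ (f s)⁻¹ ≤ D)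
    (hx : x ∈ Icc a b) (hy : y ∈ Icc a b) :
    |x - y| ≤ D * |(∫ s in a..x, f s) - ∫ s in a..y, f s| := by
  have ha : a ∈ Icc a b := left_mem_Icc.2 (hx.1.trans hx.2)
  have hint {u v : ℝ} (hu : u ∈ Icc a b) (hv : v ∈ Icc a b) :
      IntervalIntegrable f MeasureTheory.volume u v :=
    (hfc.mono (uIcc_subset_Icc hu hv)).intervalIntegrable
  rw [integral_interval_sub_left (hint ha hx) (hint ha hy), abs_sub_comm]
  exact abs_sub_le_mul_abs_integral (hint hy hx) fun s hs => hf s (uIcc_subset_Icc hy hx hs)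

lemma abs_sub_le_of_abs_deriv_le {f : ℝ → ℝ} {a b C : ℝ} (hfc : ContinuousOn f (Icc a b))
    (hfd : DifferentiableOn ℝ f (Ioo a b)) (hC : ∀ x ∈ Ioo a b, |deriv f x| ≤ C) {x y : ℝ}
    (hx : x ∈ Icc a b) (hy : y ∈ Icc a b) : |f x - f y| ≤ C * |x - y| := by
  wlog hxy : x < y generalizing x y
  · rcases (not_lt.1 hxy).eq_or_lt with rfl | hyx
    · simp
    · rw [abs_sub_comm, abs_sub_comm x]
      exact this hy hx hyx
  have hsub : Icc x y ⊆ Icc a b := Icc_subset_Icc hx.1 hy.2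
  obtain ⟨c, hc, hslope⟩ := exists_deriv_eq_slope f hxy (hfc.mono hsub)
    (hfd.mono (Ioo_subset_Ioo hx.1 hy.2))
  rw [eq_div_iff (sub_pos.2 hxy).ne'] at hslope
  rw [abs_sub_comm, abs_sub_comm x, ← hslope, abs_mul]
  exact mul_le_mul_of_nonneg_right (hC c (Ioo_subset_Ioo hx.1 hy.2 hc)) (abs_nonneg _)

theorem log_quantile_density_sup_lipschitz_general
    (f g : ℝ → ℝ) (D₀ : ℝ)
    (hf : ContDiffOn ℝ 1 f (Set.Icc 0 1)) (hgc : ContinuousOn g (Set.Icc 0 1))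
    (hfpos : ∀ x ∈ Set.Icc (0:ℝ) 1, 0 < f x) (hgpos : ∀ x ∈ Set.Icc (0:ℝ) 1, 0 < g x)
    (hD : ∀ x ∈ Set.Icc (0:ℝ) 1,
      f x ≤ D₀ ∧ (f x)⁻¹ ≤ D₀ ∧ g x ≤ D₀ ∧ (g x)⁻¹ ≤ D₀ ∧ |deriv f x| ≤ D₀)
    (F G Finv Ginv : ℝ → ℝ)
    (hF : ∀ x, F x = ∫ s in (0:ℝ)..x, f s) (hG : ∀ x, G x = ∫ s in (0:ℝ)..x, g s)
    (hFinv : ∀ t ∈ Set.Icc (0:ℝ) 1, Finv t ∈ Set.Icc (0:ℝ) 1 ∧ F (Finv t) = t)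
    (hGinv : ∀ t ∈ Set.Icc (0:ℝ) 1, Ginv t ∈ Set.Icc (0:ℝ) 1 ∧ G (Ginv t) = t) :
    ∀ t ∈ Set.Icc (0:ℝ) 1,
      |(-Real.log (f (Finv t))) - (-Real.log (g (Ginv t)))| ≤
        D₀ * (D₀ ^ 2 + 1) * ⨆ x : Set.Icc (0:ℝ) 1, |f x.1 - g x.1| := by
  intro t ht
  obtain ⟨ha, hFa⟩ := hFinv t ht
  obtain ⟨hb, hGb⟩ := hGinv t ht
  set a := Finv t
  set b := Ginv t
  set M := ⨆ x : Set.Icc (0:ℝ) 1, |f x.1 - g x.1|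
  have h0 : (0 : ℝ) ∈ Icc 0 1 := left_mem_Icc.2 zero_le_one
  have hD₀ : 0 ≤ D₀ := (inv_pos.2 (hfpos 0 h0)).le.trans (hD 0 h0).2.1
  have hfc : ContinuousOn f (Icc 0 1) := hf.continuousOn
  have hfgM : ∀ x ∈ Icc (0:ℝ) 1, |f x - g x| ≤ M := fun x hx =>
    le_ciSup_of_isCompact_of_continuousOn (φ := fun x => |f x - g x|) isCompact_Icc
      (hfc.sub hgc).abs hx
  have hab : |a - b| ≤ D₀ * M :=
    calc |a - b| ≤ D₀ * |F a - F b| := by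
          simpa only [hF] using abs_sub_le_mul_abs_integral_sub_integral hfc
            (fun x hx => ⟨hfpos x hx, (hD x hx).2.1⟩) ha hb
      _ = D₀ * |F b - G b| := by rw [hFa, ← hGb, abs_sub_comm]
      _ ≤ D₀ * M := by
          gcongr
          simpa only [hF, hG, sub_zero, mul_one] using
            abs_integral_sub_integral_le_of_abs_sub_le_on_Icc hfc hgc hb hfgM
  have hfab : |f a - f b| ≤ D₀ * |a - b| :=
    abs_sub_le_of_abs_deriv_le hfc ((hf.differentiableOn one_ne_zero).mono Ioo_subset_Icc_self)
      (fun x hx => (hD x (Ioo_subset_Icc_self hx)).2.2.2.2) ha hb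
  calc |(-Real.log (f a)) - (-Real.log (g b))| = |Real.log (f a) - Real.log (g b)| := by
        rw [neg_sub_neg, abs_sub_comm]
    _ ≤ D₀ * |f a - g b| :=
        Real.abs_log_sub_log_le (hfpos a ha) (hgpos b hb) (hD a ha).2.1 (hD b hb).2.2.2.1
    _ ≤ D₀ * (|f a - f b| + |f b - g b|) := mul_le_mul_of_nonneg_left (abs_sub_le _ _ _) hD₀
    _ ≤ D₀ * (D₀ * (D₀ * M) + M) := by
        gcongr
        · exact hfab.trans (mul_le_mul_of_nonneg_left hab hD₀)
        · exact hfgM b hb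
    _ = D₀ * (D₀ ^ 2 + 1) * M := by ring

/-- The log quantile density transformation is Lipschitz in sup norm:
`sup |ψ_Q(f) - ψ_Q(g)| ≤ D₀(D₀² + 1) sup |f - g|`. -/
theorem log_quantile_density_sup_lipschitz
    (f g : ℝ → ℝ) (D₀ : ℝ)
    (hf : ContDiffOn ℝ 1 f (Set.Icc 0 1)) (hgc : ContinuousOn g (Set.Icc 0 1))
    (hfpos : ∀ x ∈ Set.Icc (0:ℝ) 1, 0 < f x) (hgpos : ∀ x ∈ Set.Icc (0:ℝ) 1, 0 < g x)
    (hf1 : (∫ x in (0:ℝ)..1, f x) = 1) (hg1 : (∫ x in (0:ℝ)..1, g x) = 1)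
    (hD : ∀ x ∈ Set.Icc (0:ℝ) 1,
      f x ≤ D₀ ∧ (f x)⁻¹ ≤ D₀ ∧ g x ≤ D₀ ∧ (g x)⁻¹ ≤ D₀ ∧ |deriv f x| ≤ D₀)
    (F G Finv Ginv : ℝ → ℝ)
    (hF : ∀ x, F x = ∫ s in (0:ℝ)..x, f s) (hG : ∀ x, G x = ∫ s in (0:ℝ)..x, g s)
    (hFinv : ∀ t ∈ Set.Icc (0:ℝ) 1, Finv t ∈ Set.Icc (0:ℝ) 1 ∧ F (Finv t) = t)
    (hGinv : ∀ t ∈ Set.Icc (0:ℝ) 1, Ginv t ∈ Set.Icc (0:ℝ) 1 ∧ G (Ginv t) = t) :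
    ∀ t ∈ Set.Icc (0:ℝ) 1,
      |(-Real.log (f (Finv t))) - (-Real.log (g (Ginv t)))| ≤
        D₀ * (D₀ ^ 2 + 1) * ⨆ x : Set.Icc (0:ℝ) 1, |f x.1 - g x.1| :=
  log_quantile_density_sup_lipschitz_general f g D₀ hf hgc hfpos hgpos hD F G Finv Ginv hF hG hFinv
    hGinv
end

section
/- Let X be a continuous function on [0,1], θ_X = ∫₀¹ e^{X(s)} ds. Then θ_X^{-1} ≤ e^{‖X‖_∞}, and for another continuous function Y with θ_Y = ∫₀¹ e^{Y(s)} ds, |θ_X - θ_Y| ≤ e^{‖X‖_∞ + d_∞(X,Y)} d₂(X,Y), and consequently for the normalized quantile functions F^{-1}(t) = θ_X^{-1}∫₀ᵗ e^{X(s)} ds and G^{-1}(t) = θ_Y^{-1}∫₀ᵗ e^{Y(s)} ds one has sup_{t∈[0,1]} |F^{-1}(t) - G^{-1}(t)| ≤ 2 e^{2‖X‖_∞ + d_∞(X,Y)} d₂(X,Y). -/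
/-! Since `|X| ≤ ‖X‖∞` on `[0,1]`, `θ_X ≥ e^{-‖X‖∞}`. The mean value bound
`|e^x - e^y| ≤ e^{max x y} |x - y|`, with `max (X s) (Y s) ≤ ‖X‖∞ + d∞(X,Y)`, integrates to
`|∫₀ᵗ e^X - ∫₀ᵗ e^Y| ≤ e^{‖X‖∞ + d∞(X,Y)} ∫₀¹ |X - Y|` for every `t ∈ [0,1]`, and
`∫₀¹ |X - Y| ≤ d₂(X,Y)` because `[0,1]` is a probability space (the variance of `|X - Y|` is
nonnegative). The case `t = 1` bounds `|θ_X - θ_Y|`; for the quantile functions write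
`θ_X⁻¹ A - θ_Y⁻¹ B = θ_X⁻¹ (A - B) + θ_X⁻¹ (θ_Y - θ_X) (B / θ_Y)` and use `0 ≤ B ≤ θ_Y`. -/
open Set MeasureTheory ProbabilityTheory Real

lemma abs_exp_sub_exp_le (a b : ℝ) : |exp a - exp b| ≤ exp (max a b) * |a - b| := by
  wlog hba : b ≤ a generalizing a b
  · simpa only [abs_sub_comm, max_comm] using this b a (le_of_not_ge hba)
  rw [abs_of_nonneg (sub_nonneg.2 (exp_le_exp.2 hba)), abs_of_nonneg (sub_nonneg.2 hba),
    max_eq_left hba]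
  have hexp : exp a * (b - a + 1) ≤ exp b := by
    rw [show exp b = exp a * exp (b - a) by rw [← exp_add, add_sub_cancel]]
    exact mul_le_mul_of_nonneg_left (add_one_le_exp _) (exp_pos a).le
  nlinarith

lemma abs_exp_sub_exp_le_of_abs_le {x y M D : ℝ} (hx : |x| ≤ M) (hxy : |x - y| ≤ D) :
    |exp x - exp y| ≤ exp (M + D) * |x - y| := by
  have hmax : max x y ≤ M + D := by
    cases abs_le.1 hx; cases abs_le.1 hxy
    exact max_le (by linarith [abs_nonneg (x - y)]) (by linarith)
  exact (abs_exp_sub_exp_le x y).trans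
    (mul_le_mul_of_nonneg_right (exp_le_exp.2 hmax) (abs_nonneg _))

lemma abs_le_iSup_abs_of_continuousOn {α : Type*} [TopologicalSpace α] {s : Set α}
    (hs : IsCompact s) {f : α → ℝ} (hf : ContinuousOn f s) {x : α} (hx : x ∈ s) :
    |f x| ≤ ⨆ t : s, |f t| := by
  refine le_ciSup (f := fun t : s => |f t|) ?_ ⟨x, hx⟩
  simpa only [image_eq_range] using hs.bddAbove_image hf.abs

lemma integral_abs_le_sqrt_integral_sq {Ω : Type*} [MeasurableSpace Ω] {μ : Measure Ω}
    [IsProbabilityMeasure μ] {f : Ω → ℝ} (hf : MemLp f 2 μ) :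
    ∫ x, |f x| ∂μ ≤ √(∫ x, f x ^ 2 ∂μ) := by
  have h := variance_eq_sub hf.abs
  simp only [Pi.abs_apply, Pi.pow_apply, sq_abs] at h
  exact le_sqrt_of_sq_le (by linarith [h ▸ variance_nonneg |f| μ])

lemma integral_zero_one_abs_le_sqrt_integral_sq {f : ℝ → ℝ} (hf : ContinuousOn f (Icc 0 1)) :
    ∫ s in (0:ℝ)..1, |f s| ≤ √(∫ s in (0:ℝ)..1, f s ^ 2) := by
  have : IsProbabilityMeasure (volume.restrict (Ioc (0:ℝ) 1)) := ⟨by simp⟩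
  obtain ⟨C, hC⟩ := isCompact_Icc.exists_bound_of_continuousOn hf
  simp only [intervalIntegral.integral_of_le zero_le_one]
  refine integral_abs_le_sqrt_integral_sq (MemLp.of_bound
    ((hf.mono Ioc_subset_Icc_self).aestronglyMeasurable measurableSet_Ioc) C ?_)
  exact (ae_restrict_iff' measurableSet_Ioc).2
    (.of_forall fun s hs => hC s (Ioc_subset_Icc_self hs))

lemma ContinuousOn.intervalIntegrable_of_mem_Icc {f : ℝ → ℝ} {a b c d : ℝ}
    (hf : ContinuousOn f (Icc a b)) (hc : c ∈ Icc a b) (hd : d ∈ Icc a b) :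
    IntervalIntegrable f volume c d :=
  (hf.mono (uIcc_subset_Icc hc hd)).intervalIntegrable

lemma abs_integral_sub_integral_le {f g h : ℝ → ℝ} {a b t : ℝ} (hf : ContinuousOn f (Icc a b))
    (hg : ContinuousOn g (Icc a b)) (hh : ContinuousOn h (Icc a b))
    (hfg : ∀ s ∈ Icc a b, |f s - g s| ≤ h s) (ht : t ∈ Icc a b) :
    |(∫ s in a..t, f s) - ∫ s in a..t, g s| ≤ ∫ s in a..b, h s := by
  have ha : a ∈ Icc a b := left_mem_Icc.2 (ht.1.trans ht.2)
  have hb : b ∈ Icc a b := right_mem_Icc.2 (ht.1.trans ht.2)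
  have hf' := hf.intervalIntegrable_of_mem_Icc ha ht
  have hg' := hg.intervalIntegrable_of_mem_Icc ha ht
  calc |(∫ s in a..t, f s) - ∫ s in a..t, g s|
      = |∫ s in a..t, (f s - g s)| := by rw [intervalIntegral.integral_sub hf' hg']
    _ ≤ ∫ s in a..t, |f s - g s| := intervalIntegral.abs_integral_le_integral_abs ht.1
    _ ≤ ∫ s in a..t, h s :=
        intervalIntegral.integral_mono_on ht.1 (hf'.sub hg').abs
          (hh.intervalIntegrable_of_mem_Icc ha ht) fun s hs => hfg s ⟨hs.1, hs.2.trans ht.2⟩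
    _ ≤ ∫ s in a..b, h s :=
        intervalIntegral.integral_mono_interval le_rfl ht.1 ht.2
          ((ae_restrict_iff' measurableSet_Ioc).2 (.of_forall fun s hs =>
            (abs_nonneg _).trans (hfg s (Ioc_subset_Icc_self hs))))
          (hh.intervalIntegrable_of_mem_Icc ha hb)

lemma inv_integral_exp_le {X : ℝ → ℝ} {M : ℝ} (hX : ContinuousOn X (Icc 0 1))
    (hM : ∀ s ∈ Icc (0:ℝ) 1, |X s| ≤ M) : (∫ s in (0:ℝ)..1, exp (X s))⁻¹ ≤ exp M := by
  have hlow : exp (-M) ≤ ∫ s in (0:ℝ)..1, exp (X s) := by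
    simpa using intervalIntegral.integral_mono_on zero_le_one intervalIntegrable_const
      ((continuous_exp.comp_continuousOn hX).intervalIntegrable_of_mem_Icc
        (left_mem_Icc.2 zero_le_one) (right_mem_Icc.2 zero_le_one))
      fun s hs => exp_le_exp.2 ((neg_le_neg (hM s hs)).trans (neg_abs_le _))
  simpa [← exp_neg] using inv_anti₀ (exp_pos (-M)) hlow

lemma abs_inv_mul_sub_inv_mul_le {θ θ' A B : ℝ} (hθ : 0 < θ) (hθ' : 0 < θ') (hB : 0 ≤ B)
    (hBθ' : B ≤ θ') : |θ⁻¹ * A - θ'⁻¹ * B| ≤ θ⁻¹ * (|A - B| + |θ - θ'|) := by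
  have hsplit : θ⁻¹ * A - θ'⁻¹ * B = θ⁻¹ * (A - B) + θ⁻¹ * ((θ' - θ) * (B / θ')) := by
    field_simp; ring
  have hBθ'1 : |B / θ'| ≤ 1 := by
    rw [abs_of_nonneg (div_nonneg hB hθ'.le)]; exact div_le_one_of_le₀ hBθ' hθ'.le
  rw [hsplit, ← mul_add, abs_mul, abs_of_pos (inv_pos.2 hθ)]
  gcongr
  refine (abs_add_le _ _).trans (add_le_add le_rfl ?_)
  rw [abs_mul, abs_sub_comm]
  exact mul_le_of_le_one_right (abs_nonneg _) hBθ'1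

lemma integral_exp_pos {X : ℝ → ℝ} {a b : ℝ} (hX : ContinuousOn X (Icc a b)) (hab : a < b) :
    0 < ∫ s in a..b, exp (X s) :=
  intervalIntegral.intervalIntegral_pos_of_pos_on
    ((continuous_exp.comp_continuousOn hX).intervalIntegrable_of_mem_Icc
      (left_mem_Icc.2 hab.le) (right_mem_Icc.2 hab.le))
    (fun _ _ => exp_pos _) hab

lemma integral_mem_Icc_zero_integral_of_nonneg {f : ℝ → ℝ} {a b t : ℝ}
    (hf : ContinuousOn f (Icc a b)) (hf0 : ∀ s, 0 ≤ f s) (ht : t ∈ Icc a b) :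
    ∫ s in a..t, f s ∈ Icc 0 (∫ s in a..b, f s) :=
  ⟨intervalIntegral.integral_nonneg ht.1 fun s _ => hf0 s,
    intervalIntegral.integral_mono_interval le_rfl ht.1 ht.2 (.of_forall hf0)
      (hf.intervalIntegrable_of_mem_Icc (left_mem_Icc.2 (ht.1.trans ht.2))
        (right_mem_Icc.2 (ht.1.trans ht.2)))⟩

/-- Continuity estimates for the inverse log quantile density map:
bounds on `θ_X⁻¹`, `|θ_X - θ_Y|` and on the normalized quantile functions. -/
theorem inverse_lqd_continuity
    (X Y : ℝ → ℝ)
    (hX : ContinuousOn X (Set.Icc 0 1)) (hY : ContinuousOn Y (Set.Icc 0 1)) :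
    (∫ s in (0:ℝ)..1, Real.exp (X s))⁻¹ ≤ Real.exp (⨆ t : Set.Icc (0:ℝ) 1, |X t.1|) ∧
    |(∫ s in (0:ℝ)..1, Real.exp (X s)) - ∫ s in (0:ℝ)..1, Real.exp (Y s)| ≤
      Real.exp ((⨆ t : Set.Icc (0:ℝ) 1, |X t.1|) + ⨆ t : Set.Icc (0:ℝ) 1, |X t.1 - Y t.1|) *
        (∫ s in (0:ℝ)..1, (X s - Y s) ^ 2) ^ ((1:ℝ)/2) ∧
    ∀ t ∈ Set.Icc (0:ℝ) 1,
      |(∫ s in (0:ℝ)..1, Real.exp (X s))⁻¹ * (∫ s in (0:ℝ)..t, Real.exp (X s)) -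
          (∫ s in (0:ℝ)..1, Real.exp (Y s))⁻¹ * (∫ s in (0:ℝ)..t, Real.exp (Y s))| ≤
        2 * Real.exp (2 * (⨆ u : Set.Icc (0:ℝ) 1, |X u.1|) +
            ⨆ u : Set.Icc (0:ℝ) 1, |X u.1 - Y u.1|) *
          (∫ s in (0:ℝ)..1, (X s - Y s) ^ 2) ^ ((1:ℝ)/2) := by
  set M := ⨆ t : Icc (0:ℝ) 1, |X t.1|
  set D := ⨆ t : Icc (0:ℝ) 1, |X t.1 - Y t.1|
  set d₂ := (∫ s in (0:ℝ)..1, (X s - Y s) ^ 2) ^ ((1:ℝ)/2)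
  have hM (s) (hs : s ∈ Icc (0:ℝ) 1) : |X s| ≤ M :=
    abs_le_iSup_abs_of_continuousOn isCompact_Icc hX hs
  have hD (s) (hs : s ∈ Icc (0:ℝ) 1) : |X s - Y s| ≤ D :=
    abs_le_iSup_abs_of_continuousOn isCompact_Icc (hX.sub hY) hs
  have hdiff (t) (ht : t ∈ Icc (0:ℝ) 1) :
      |(∫ s in (0:ℝ)..t, exp (X s)) - ∫ s in (0:ℝ)..t, exp (Y s)| ≤ exp (M + D) * d₂ := by
    refine (abs_integral_sub_integral_le (by fun_prop) (by fun_prop) (by fun_prop)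
      (fun s hs => abs_exp_sub_exp_le_of_abs_le (hM s hs) (hD s hs)) ht).trans ?_
    rw [intervalIntegral.integral_const_mul]
    gcongr
    exact (integral_zero_one_abs_le_sqrt_integral_sq (hX.sub hY)).trans_eq (sqrt_eq_rpow _)
  have hθX := inv_integral_exp_le hX hM
  refine ⟨hθX, hdiff 1 (right_mem_Icc.2 zero_le_one), fun t ht => ?_⟩
  obtain ⟨hB0, hBθY⟩ := integral_mem_Icc_zero_integral_of_nonneg (by fun_prop)
    (fun s => (exp_pos (Y s)).le) ht
  calc _ ≤ (∫ s in (0:ℝ)..1, exp (X s))⁻¹ *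
        (|(∫ s in (0:ℝ)..t, exp (X s)) - ∫ s in (0:ℝ)..t, exp (Y s)| +
          |(∫ s in (0:ℝ)..1, exp (X s)) - ∫ s in (0:ℝ)..1, exp (Y s)|) :=
        abs_inv_mul_sub_inv_mul_le (integral_exp_pos hX zero_lt_one)
          (integral_exp_pos hY zero_lt_one) hB0 hBθY
    _ ≤ exp M * (exp (M + D) * d₂ + exp (M + D) * d₂) := by
        gcongr
        exacts [hdiff t ht, hdiff 1 (right_mem_Icc.2 zero_le_one)]
    _ = 2 * exp (2 * M + D) * d₂ := by
        rw [show 2 * M + D = M + (M + D) by ring, exp_add M (M + D)]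
        ring
end
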